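/- arXiv:2605.06865 — 2 statements merged into one kernel-verified Lean document; each statement's English description precedes it below -/
import Mathlib

section
/- Hoeffding's inequality for sampling without replacement: let X be the number of marked items in a uniform random sample of size d drawn without replacement from a population of N items containing K marked items, and let p = K/N. Then for any ε > 0, P(X ≥ d(p + ε)) ≤ exp(-2 ε² d). -/
/-!
Chernoff's bound with `t = 4ε` reduces the tail to the moment generating function of `X`, and
Hoeffding's lemma `1 - p + p eᵗ ≤ exp (p t + t² / 8)` finishes once `X` is compared with the
binomial case: `E exp (t X) ≤ (1 - p + p eᵗ) ^ d` for `t ≥ 0`. That comparison goes by induction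
on the sample size. Counting the pairs `(s, x)` with `x ∈ s` and `|s| = m + 1` through
`u = s \ {x}` gives
`(m + 1) ∑_{|s| = m + 1} e^{t X(s)} = ∑_{|u| = m} e^{t X(u)} ((N - m) + (eᵗ - 1) (K - X(u)))`,
and since `e^{t X}` and `K - X` are oppositely ordered, Chebyshev's sum inequality replaces
`K - X(u)` by its mean `K (N - m) / N`, leaving `(N - m) (1 - p + p eᵗ)` times the sum for `m`.
-/

open Finset Real

/-- The "marked" set: the first `K` elements of `Fin N`. -/
def marked (N K : ℕ) : Finset (Fin N) :=
  (Finset.univ : Finset (Fin N)).filter (fun i => (i : ℕ) < K)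

/-- Probability, under a uniformly random `d`-element subset `sk` of an `N`-element
set with `K` marked elements, that `X = |sk ∩ Marked|` satisfies the event `E`. -/
noncomputable def hyperProb (N K d : ℕ) (E : ℕ → Prop) : ℝ :=
  letI : DecidablePred (fun s : Finset (Fin N) => E ((s ∩ marked N K).card)) :=
    fun _ => Classical.dec _
  ((((Finset.univ : Finset (Fin N)).powersetCard d).filter
      (fun s => E ((s ∩ marked N K).card))).card : ℝ) /
    ((((Finset.univ : Finset (Fin N)).powersetCard d).card : ℝ))

open ProbabilityTheory

theorem one_sub_add_mul_exp_le_exp {p : ℝ} (hp₀ : 0 ≤ p) (hp₁ : p ≤ 1) (t : ℝ) :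
    1 - p + p * exp t ≤ exp (p * t + t ^ 2 / 8) := by
  let q : unitInterval := ⟨p, hp₀, hp₁⟩
  -- the left side is the moment generating function of a centred Bernoulli(p) variable
  have hoeffding : p * exp (t * (1 - p)) + (1 - p) * exp (-(t * p)) ≤ exp (t ^ 2 / 8) := by
    convert (hasSubgaussianMGF_of_mem_Icc (μ := Ber(true, false, q)) (a := 0) (b := 1)
      (X := fun b => if b then (1 : ℝ) else 0) .of_discrete
      (.of_forall fun b => by cases b <;> simp)).mgf_le t using 1
    · simp [mgf, integral_bernoulliMeasure, q]
    · norm_num; ring_nf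
  have h₁ : exp (p * t) * exp (t * (1 - p)) = exp t := by rw [← exp_add]; ring_nf
  have h₀ : exp (p * t) * exp (-(t * p)) = 1 := by rw [← exp_add]; ring_nf; exact exp_zero
  calc 1 - p + p * exp t
      = exp (p * t) * (p * exp (t * (1 - p)) + (1 - p) * exp (-(t * p))) := by
        linear_combination -p * h₁ - (1 - p) * h₀
    _ ≤ exp (p * t) * exp (t ^ 2 / 8) := by gcongr
    _ = exp (p * t + t ^ 2 / 8) := (exp_add _ _).symm

theorem card_filter_le_sum_exp {ι : Type*} (S : Finset ι) (f : ι → ℝ) {t : ℝ} (ht : 0 ≤ t)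
    (a : ℝ) : (#{s ∈ S | a ≤ f s} : ℝ) ≤ ∑ s ∈ S, exp (t * (f s - a)) := by
  rw [card_filter, Nat.cast_sum]
  refine sum_le_sum fun s _ => ?_
  split_ifs with h
  · simpa using one_le_exp (mul_nonneg ht (sub_nonneg.2 h))
  · simpa using (exp_pos _).le

section
variable {α : Type*} [DecidableEq α] (M : Finset α)

theorem card_erase_inter_add_ite {s : Finset α} {x : α} (hx : x ∈ s) :
    #(s.erase x ∩ M) + (if x ∈ M then 1 else 0) = #(s ∩ M) := by
  rw [erase_inter]
  split_ifs with hxM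
  · exact card_erase_add_one (mem_inter.2 ⟨hx, hxM⟩)
  · rw [erase_eq_of_notMem fun h => hxM (mem_inter.1 h).2, add_zero]

theorem exp_mul_card_inter_eq_of_mem (t : ℝ) {s : Finset α} {x : α} (hx : x ∈ s) :
    exp (t * #(s ∩ M)) = exp (t * #(s.erase x ∩ M)) * (1 + if x ∈ M then exp t - 1 else 0) := by
  rw [← card_erase_inter_add_ite M hx]
  split_ifs <;> simp [mul_add, exp_add]

variable [Fintype α]

theorem sum_powersetCard_succ_sum_erase {β : Type*} [AddCommMonoid β] (m : ℕ)
    (G : Finset α → α → β) :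
    ∑ s ∈ powersetCard (m + 1) univ, ∑ x ∈ s, G (s.erase x) x =
      ∑ u ∈ powersetCard m univ, ∑ x ∈ uᶜ, G u x := by
  rw [sum_sigma', sum_sigma']
  refine sum_nbij' (fun p => ⟨p.1.erase p.2, p.2⟩) (fun p => ⟨insert p.2 p.1, p.2⟩)
    ?_ ?_ ?_ ?_ fun _ _ => rfl
  · rintro ⟨s, x⟩ hp
    simp only [mem_sigma, mem_powersetCard_univ, mem_compl] at hp ⊢
    simp [card_erase_of_mem hp.2, hp.1]
  · rintro ⟨u, x⟩ hp
    simp only [mem_sigma, mem_powersetCard_univ, mem_compl] at hp ⊢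
    simp [card_insert_of_notMem hp.2, hp.1]
  · rintro ⟨s, x⟩ hp
    simp [insert_erase (mem_sigma.1 hp).2]
  · rintro ⟨u, x⟩ hp
    simp [erase_insert (mem_compl.1 (mem_sigma.1 hp).2)]

theorem card_compl_inter_add_card_inter (u : Finset α) :
    #(uᶜ ∩ M) + #(u ∩ M) = #M := by
  rw [← card_union_of_disjoint (disjoint_compl_left.mono inter_subset_left inter_subset_left),
    ← union_inter_distrib_right, union_comm, union_compl, univ_inter]

theorem sum_card_inter_powersetCard_succ_add (m : ℕ) :
    ∑ s ∈ powersetCard (m + 1) univ, #(s ∩ M) + ∑ u ∈ powersetCard m univ, #(u ∩ M) =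
      #M * (Fintype.card α).choose m := by
  have hcount := sum_powersetCard_succ_sum_erase m fun _ x => if x ∈ M then 1 else 0
  simp only [sum_boole, Nat.cast_id, filter_mem_eq_inter] at hcount
  rw [hcount, ← sum_add_distrib, sum_congr rfl fun u _ => card_compl_inter_add_card_inter M u,
    sum_const, card_powersetCard, card_univ, smul_eq_mul, mul_comm]

theorem card_mul_sum_card_inter_powersetCard {m : ℕ} (hm : m ≤ Fintype.card α) :
    Fintype.card α * ∑ u ∈ powersetCard m univ, #(u ∩ M) =
      #M * m * (Fintype.card α).choose m := by
  induction m with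
  | zero => simp
  | succ m ih =>
    obtain ⟨r, hr⟩ := Nat.exists_eq_add_of_le (Nat.le_of_succ_le hm)
    have hsum := sum_card_inter_powersetCard_succ_add M m
    have hchoose := Nat.choose_succ_right_eq (Fintype.card α) m
    have ih := ih (Nat.le_of_succ_le hm)
    rw [hr, Nat.add_sub_cancel_left] at hchoose
    rw [hr] at hsum ih ⊢
    zify at hsum ih hchoose ⊢
    linear_combination (m + r : ℤ) * hsum - ih - (#M : ℤ) * hchoose

theorem succ_mul_sum_exp_card_inter_powersetCard_succ (t : ℝ) {m : ℕ}
    (hm : m ≤ Fintype.card α) :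
    (m + 1) * ∑ s ∈ powersetCard (m + 1) univ, exp (t * #(s ∩ M)) =
      ∑ u ∈ powersetCard m univ, exp (t * #(u ∩ M)) *
        ((Fintype.card α - m) + (exp t - 1) * (#M - #(u ∩ M))) := by
  have hcount := sum_powersetCard_succ_sum_erase m fun u x =>
    exp (t * #(u ∩ M)) * (1 + if x ∈ M then exp t - 1 else 0)
  have hinner (s) (hs : s ∈ powersetCard (m + 1) univ) :
      (m + 1) * exp (t * #(s ∩ M)) =
        ∑ x ∈ s, exp (t * #(s.erase x ∩ M)) * (1 + if x ∈ M then exp t - 1 else 0) := by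
    rw [← sum_congr rfl fun x hx => exp_mul_card_inter_eq_of_mem M t hx, sum_const,
      (mem_powersetCard_univ.1 hs), nsmul_eq_mul]
    push_cast; ring
  have houter (u) (hu : u ∈ powersetCard m univ) :
      ∑ x ∈ uᶜ, (1 + if x ∈ M then exp t - 1 else 0) =
        (Fintype.card α - m) + (exp t - 1) * (#M - #(u ∩ M)) := by
    have hcompl : (#(uᶜ ∩ M) : ℝ) + #(u ∩ M) = #M := by
      exact_mod_cast card_compl_inter_add_card_inter M u
    rw [sum_add_distrib, sum_const, sum_ite_mem, sum_const, card_compl,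
      mem_powersetCard_univ.1 hu, nsmul_eq_mul, nsmul_eq_mul, Nat.cast_sub hm]
    linear_combination (exp t - 1) * hcompl
  rw [mul_sum, sum_congr rfl hinner, hcount]
  exact sum_congr rfl fun u hu => by rw [← mul_sum, houter u hu]

theorem card_mul_sum_exp_mul_sub_card_inter_le {t : ℝ} (ht : 0 ≤ t) {m : ℕ}
    (hm : m ≤ Fintype.card α) :
    Fintype.card α * ∑ u ∈ powersetCard m univ, exp (t * #(u ∩ M)) * (#M - #(u ∩ M)) ≤
      #M * (Fintype.card α - m) * ∑ u ∈ powersetCard m univ, exp (t * #(u ∩ M)) := by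
  set n := Fintype.card α
  have hC : (0 : ℝ) < n.choose m := by exact_mod_cast Nat.choose_pos hm
  have hcheb := AntivaryOn.card_mul_sum_le_sum_mul_sum (s := powersetCard m univ)
    (f := fun u => exp (t * #(u ∩ M))) (g := fun u => (#M : ℝ) - #(u ∩ M))
    fun u _ v _ huv => exp_le_exp.2 (mul_le_mul_of_nonneg_left (by linarith) ht)
  rw [card_powersetCard, card_univ] at hcheb
  have hmean : (n : ℝ) * ∑ u ∈ powersetCard m univ, ((#M : ℝ) - #(u ∩ M)) =
      #M * (n - m) * n.choose m := by
    have hsum : (n : ℝ) * ∑ u ∈ powersetCard m univ, (#(u ∩ M) : ℝ) = #M * m * n.choose m := by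
      exact_mod_cast card_mul_sum_card_inter_powersetCard M hm
    rw [sum_sub_distrib, sum_const, card_powersetCard, card_univ, nsmul_eq_mul]
    linear_combination -hsum
  refine le_of_mul_le_mul_left ?_ hC
  calc (n.choose m : ℝ) * (n * ∑ u ∈ powersetCard m univ, exp (t * #(u ∩ M)) * (#M - #(u ∩ M)))
      ≤ n * ((∑ u ∈ powersetCard m univ, exp (t * #(u ∩ M))) *
          ∑ u ∈ powersetCard m univ, ((#M : ℝ) - #(u ∩ M))) := by
        rw [mul_left_comm]; gcongr
    _ = n.choose m * (#M * (n - m) * ∑ u ∈ powersetCard m univ, exp (t * #(u ∩ M))) := by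
        rw [mul_left_comm, hmean]; ring

theorem succ_mul_sum_exp_card_inter_powersetCard_succ_le {t : ℝ} (ht : 0 ≤ t) {m : ℕ}
    (hm : m < Fintype.card α) :
    (m + 1) * ∑ s ∈ powersetCard (m + 1) univ, exp (t * #(s ∩ M)) ≤
      (Fintype.card α - m) * (1 - #M / Fintype.card α + #M / Fintype.card α * exp t) *
        ∑ u ∈ powersetCard m univ, exp (t * #(u ∩ M)) := by
  set n := Fintype.card α
  set S := ∑ u ∈ powersetCard m univ, exp (t * #(u ∩ M))
  set F := ∑ u ∈ powersetCard m univ, exp (t * #(u ∩ M)) * (#M - #(u ∩ M))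
  have hn : (0 : ℝ) < n := by exact_mod_cast hm.trans_le' (Nat.zero_le m)
  have hF : F ≤ #M * (n - m) / n * S := by
    rw [div_mul_eq_mul_div, le_div_iff₀ hn, mul_comm]
    exact card_mul_sum_exp_mul_sub_card_inter_le M ht hm.le
  have hsplit : (m + 1) * ∑ s ∈ powersetCard (m + 1) univ, exp (t * #(s ∩ M)) =
      (n - m) * S + (exp t - 1) * F := by
    rw [succ_mul_sum_exp_card_inter_powersetCard_succ M t hm.le, mul_sum, mul_sum,
      ← sum_add_distrib]
    exact sum_congr rfl fun _ _ => by ring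
  calc (m + 1) * ∑ s ∈ powersetCard (m + 1) univ, exp (t * #(s ∩ M))
      ≤ (n - m) * S + (exp t - 1) * (#M * (n - m) / n * S) := by
        rw [hsplit]; gcongr; linarith [add_one_le_exp t]
    _ = (n - m) * (1 - #M / n + #M / n * exp t) * S := by ring

theorem sum_exp_card_inter_powersetCard_le {t : ℝ} (ht : 0 ≤ t) (d : ℕ) :
    ∑ s ∈ powersetCard d univ, exp (t * #(s ∩ M)) ≤
      (Fintype.card α).choose d *
        (1 - #M / Fintype.card α + #M / Fintype.card α * exp t) ^ d := by
  set n := Fintype.card α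
  set B := 1 - #M / (n : ℝ) + #M / n * exp t
  induction d with
  | zero => simp
  | succ m ih =>
    rcases lt_or_ge m n with hm | hm
    · have hB : 0 ≤ B := by
        have : 0 ≤ #M / (n : ℝ) := by positivity
        nlinarith [one_le_exp ht]
      have hchoose : (n.choose (m + 1) : ℝ) * (m + 1) = n.choose m * (n - m) := by
        rw [← Nat.cast_sub hm.le]; exact_mod_cast Nat.choose_succ_right_eq n m
      refine le_of_mul_le_mul_left ?_ (by positivity : (0 : ℝ) < m + 1)
      calc _ ≤ (n - m) * B * ∑ u ∈ powersetCard m univ, exp (t * #(u ∩ M)) :=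
            succ_mul_sum_exp_card_inter_powersetCard_succ_le M ht hm
        _ ≤ (n - m) * B * (n.choose m * B ^ m) := by
            gcongr
            exact mul_nonneg (by linarith [(Nat.cast_le (α := ℝ)).2 hm.le]) hB
        _ = _ := by linear_combination (-B ^ (m + 1)) * hchoose
    · rw [powersetCard_eq_empty.2 (by simpa using Nat.lt_succ_of_le hm),
        Nat.choose_eq_zero_of_lt (Nat.lt_succ_of_le hm)]
      simp

theorem card_filter_powersetCard_le {ε : ℝ} (hε : 0 ≤ ε) (d : ℕ) :
    (#{s ∈ powersetCard d univ | d * (#M / Fintype.card α + ε) ≤ #(s ∩ M)} : ℝ) ≤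
      (Fintype.card α).choose d * exp (-2 * ε ^ 2 * d) := by
  set n := Fintype.card α
  set p := #M / (n : ℝ)
  set t := 4 * ε with ht_def
  have ht : 0 ≤ t := by positivity
  have hp₁ : p ≤ 1 := div_le_one_of_le₀ (by exact_mod_cast card_le_univ M) n.cast_nonneg
  calc (#{s ∈ powersetCard d univ | d * (p + ε) ≤ #(s ∩ M)} : ℝ)
      ≤ ∑ s ∈ powersetCard d univ, exp (t * (#(s ∩ M) - d * (p + ε))) :=
        card_filter_le_sum_exp _ _ ht _
    _ = (∑ s ∈ powersetCard d univ, exp (t * #(s ∩ M))) * exp (-(t * (d * (p + ε)))) := by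
        rw [sum_mul]; exact sum_congr rfl fun _ _ => by rw [← exp_add]; ring_nf
    _ ≤ n.choose d * (1 - p + p * exp t) ^ d * exp (-(t * (d * (p + ε)))) := by
        gcongr; exact sum_exp_card_inter_powersetCard_le M ht d
    _ ≤ n.choose d * exp (p * t + t ^ 2 / 8) ^ d * exp (-(t * (d * (p + ε)))) := by
        gcongr
        exact one_sub_add_mul_exp_le_exp (by positivity) hp₁ t
    _ = n.choose d * exp (-2 * ε ^ 2 * d) := by
        rw [mul_assoc, ← exp_nat_mul, ← exp_add, ht_def]; ring_nf

end

theorem card_marked {N K : ℕ} (hK : K ≤ N) : #(marked N K) = K := by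
  simp [marked, Fin.card_filter_val_lt, hK]

theorem hoeffding_sampling_without_replacement_general
    (N K d : ℕ) (hK : K ≤ N) (ε : ℝ) (hε : 0 < ε) :
    hyperProb N K d (fun X => (X : ℝ) ≥ d * ((K : ℝ) / N + ε)) ≤
      Real.exp (-2 * ε ^ 2 * d) := by
  have htail := card_filter_powersetCard_le (marked N K) hε.le d
  rw [card_marked hK, Fintype.card_fin] at htail
  unfold hyperProb
  rw [card_powersetCard, card_univ, Fintype.card_fin]
  refine div_le_of_le_mul₀ (Nat.cast_nonneg _) (exp_pos _).le ?_
  convert htail using 1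
  · congr 2
  · ring

/-- **Hoeffding's inequality for sampling without replacement** (Hoeffding 1963, §6):
if `X` counts the marked items in a uniform random sample of size `d` drawn without
replacement from a population of `N` items containing `K` marked items, and `p = K/N`,
then for any `ε > 0`, `P(X ≥ d(p + ε)) ≤ exp(-2 ε² d)`. -/
theorem hoeffding_sampling_without_replacement
    (N K d : ℕ) (hd : d ≤ N) (hK : K ≤ N) (ε : ℝ) (hε : 0 < ε) :
    hyperProb N K d (fun X => (X : ℝ) ≥ d * ((K : ℝ) / N + ε)) ≤
      Real.exp (-2 * ε ^ 2 * d) :=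
  hoeffding_sampling_without_replacement_general N K d hK ε hε
end

section
/- Hoeffding's lemma ingredient: for a hypergeometric random variable X with parameters (N, K, d) and p = K/N, the moment generating function satisfies E[exp(s(X - dp))] ≤ exp(s² d / 8) for all real s. -/
open Finset

/-- Expectation of `f(X)` where `X = |sk ∩ Marked|` for a uniformly random
`d`-element subset `sk` of an `N`-element set with `K` marked elements. -/
noncomputable def hyperExp (N K d : ℕ) (f : ℕ → ℝ) : ℝ :=
  (∑ s ∈ (Finset.univ : Finset (Fin N)).powersetCard d, f ((s ∩ marked N K).card)) /
    ((((Finset.univ : Finset (Fin N)).powersetCard d).card : ℝ))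

/-!
Conditioning on the first element drawn, a `d`-sample from `U` with `k` marked elements is, with
probability `k / #U`, a marked element together with a `(d - 1)`-sample from the remaining `#U - 1`
elements (`k - 1` of them marked), and otherwise an unmarked element together with such a sample
(`k` marked). By induction on `d`, `E[exp (σ X)] ≤ exp (σ d k / #U + σ² d / 8)`: the two
conditional bounds assemble into the moment generating function of a two-point law whose points
differ by `1 - (d - 1) / (#U - 1) ∈ [0, 1]`, and Hoeffding's lemma for that law contributes the
extra factor `exp (σ² / 8)`.
-/

open Real

open MeasureTheory ProbabilityTheory NNReal in
lemma two_point_mgf_le {q x y : ℝ} (hq0 : 0 ≤ q) (hq1 : q ≤ 1) (hxy : |x - y| ≤ 1) (t : ℝ) :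
    q * exp (t * x) + (1 - q) * exp (t * y) ≤ exp (t * (q * x + (1 - q) * y) + t ^ 2 / 8) := by
  set μ := Ber(true, false, ⟨q, hq0, hq1⟩)
  set X : Bool → ℝ := fun b => cond b x y
  set m := q * x + (1 - q) * y
  have hint (g : ℝ → ℝ) : ∫ b, g (X b) ∂μ = q * g x + (1 - q) * g y := by
    simp [μ, X, integral_bernoulliMeasure]
  have hoeffding := (hasSubgaussianMGF_of_mem_Icc (μ := μ) (X := X) (a := min x y)
    (b := max x y) .of_discrete (ae_of_all _ fun b => by cases b <;> simp [X])).mgf_le t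
  rw [mgf, show μ[X] = m from hint id, hint fun z => exp (t * (z - m))] at hoeffding
  have hvar : (((‖max x y - min x y‖₊ / 2) ^ 2 : ℝ≥0) : ℝ) ≤ 1 / 4 := by
    push_cast
    rw [Real.norm_eq_abs, max_sub_min_eq_abs', abs_abs]
    nlinarith [abs_nonneg (x - y)]
  calc q * exp (t * x) + (1 - q) * exp (t * y)
      = exp (t * m) * (q * exp (t * (x - m)) + (1 - q) * exp (t * (y - m))) := by
        simp only [mul_add, mul_sub, exp_sub]; field_simp
    _ ≤ exp (t * m) * exp (1 / 4 * t ^ 2 / 2) := by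
        gcongr
        exact hoeffding.trans (by gcongr)
    _ = exp (t * m + t ^ 2 / 8) := by rw [← exp_add]; ring_nf

lemma exp_mixture_le {n k e : ℝ} (hk0 : 0 ≤ k) (hk : k ≤ n + 1) (he0 : 0 ≤ e) (he : e ≤ n)
    (σ : ℝ) :
    (k * exp (σ * (1 + e * (k - 1) / n)) + (n + 1 - k) * exp (σ * (e * k / n))) / (n + 1)
      ≤ exp (σ * (e + 1) * k / (n + 1) + σ ^ 2 / 8) := by
  have hn : 0 < n + 1 := by linarith
  set q : ℝ := k / (n + 1)
  have hq0 : 0 ≤ q := by positivity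
  have hq1 : q ≤ 1 := div_le_one_of_le₀ hk hn.le
  have hen : e / n ≤ 1 := div_le_one_of_le₀ he (he0.trans he)
  have hxy : |(1 + e * (k - 1) / n) - e * k / n| ≤ 1 := by
    rw [show (1 + e * (k - 1) / n) - e * k / n = 1 - e / n by ring, abs_le]
    constructor <;> linarith [div_nonneg he0 (he0.trans he)]
  have hmean : q * (1 + e * (k - 1) / n) + (1 - q) * (e * k / n) = (e + 1) * k / (n + 1) := by
    rcases eq_or_ne n 0 with rfl | hn0
    · obtain rfl : e = 0 := by linarith
      simp [q]
    · simp only [q]; field_simp; ring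
  calc (k * exp (σ * (1 + e * (k - 1) / n)) + (n + 1 - k) * exp (σ * (e * k / n))) / (n + 1)
      = q * exp (σ * (1 + e * (k - 1) / n)) + (1 - q) * exp (σ * (e * k / n)) := by
        simp only [q]; field_simp
    _ ≤ _ := two_point_mgf_le hq0 hq1 hxy σ
    _ = _ := by rw [hmean, mul_div_assoc', mul_assoc]

section Sampling

variable {α : Type*} [DecidableEq α]

noncomputable def hypergeomExpect (U M : Finset α) (d : ℕ) (f : ℕ → ℝ) : ℝ :=
  (∑ A ∈ U.powersetCard d, f #(A ∩ M)) / #(U.powersetCard d)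

lemma hypergeomExpect_const_mul (U M : Finset α) (d : ℕ) (c : ℝ) (f : ℕ → ℝ) :
    hypergeomExpect U M d (fun X => c * f X) = c * hypergeomExpect U M d f := by
  rw [hypergeomExpect, hypergeomExpect, ← mul_sum, mul_div_assoc]

lemma hypergeomExpect_exp_mul_add (U M : Finset α) (d c : ℕ) (σ : ℝ) :
    hypergeomExpect U M d (fun X => exp (σ * ↑(X + c)))
      = exp (σ * c) * hypergeomExpect U M d (fun X => exp (σ * X)) := by
  rw [← hypergeomExpect_const_mul]
  congr 1
  funext X
  rw [← exp_add]; push_cast; ring_nf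

lemma cast_card_erase_inter {U : Finset α} {i : α} (hi : i ∈ U) (M : Finset α) :
    (#(U.erase i ∩ M) : ℝ) = #(U ∩ M) - if i ∈ M then 1 else 0 := by
  rw [erase_inter]
  split_ifs with hiM
  · rw [card_erase_of_mem (mem_inter.mpr ⟨hi, hiM⟩),
      Nat.cast_pred (card_pos.mpr ⟨i, mem_inter.mpr ⟨hi, hiM⟩⟩)]
  · rw [erase_eq_of_notMem fun h => hiM (mem_inter.mp h).2, sub_zero]

lemma filter_mem_powersetCard_succ {U : Finset α} {i : α} (hi : i ∈ U) (e : ℕ) :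
    {A ∈ U.powersetCard (e + 1) | i ∈ A} = ((U.erase i).powersetCard e).image (insert i) := by
  conv_lhs => rw [← insert_erase hi, powersetCard_succ_insert (notMem_erase i U), filter_union]
  rw [filter_false_of_mem, filter_true_of_mem, empty_union]
  · simp only [mem_image]
    rintro _ ⟨B, -, rfl⟩
    exact mem_insert_self i B
  · intro A hA hiA
    exact notMem_erase i U ((mem_powersetCard.mp hA).1 hiA)

lemma succ_mul_sum_powersetCard_succ (U : Finset α) (e : ℕ) (g : Finset α → ℝ) :
    (e + 1) * ∑ A ∈ U.powersetCard (e + 1), g A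
      = ∑ i ∈ U, ∑ B ∈ (U.erase i).powersetCard e, g (insert i B) := by
  calc (e + 1) * ∑ A ∈ U.powersetCard (e + 1), g A
      = ∑ A ∈ U.powersetCard (e + 1), ∑ i ∈ U, if i ∈ A then g A else 0 := by
        rw [mul_sum]
        refine sum_congr rfl fun A hA => ?_
        obtain ⟨hAU, hcard⟩ := mem_powersetCard.mp hA
        rw [sum_ite_mem, inter_eq_right.mpr hAU, sum_const, hcard, nsmul_eq_mul]
        push_cast; ring
    _ = ∑ i ∈ U, ∑ A ∈ {A ∈ U.powersetCard (e + 1) | i ∈ A}, g A := by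
        rw [sum_comm]; simp only [sum_filter]
    _ = ∑ i ∈ U, ∑ B ∈ (U.erase i).powersetCard e, g (insert i B) := by
        refine sum_congr rfl fun i hi => ?_
        have hiB {B} (hB : B ∈ (U.erase i).powersetCard e) : i ∉ B :=
          fun h => notMem_erase i U ((mem_powersetCard.mp hB).1 h)
        rw [filter_mem_powersetCard_succ hi, sum_image]
        intro B hB B' hB' h
        rw [← erase_insert (hiB hB), h, erase_insert (hiB hB')]

lemma card_insert_inter_of_notMem {B : Finset α} {i : α} (hi : i ∉ B) (M : Finset α) :
    #(insert i B ∩ M) = #(B ∩ M) + if i ∈ M then 1 else 0 := by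
  split_ifs with hiM
  · rw [insert_inter_of_mem hiM, card_insert_of_notMem fun h => hi (mem_inter.mp h).1]
  · rw [insert_inter_of_notMem hiM, add_zero]

lemma hypergeomExpect_succ {U : Finset α} {e : ℕ} (he : e + 1 ≤ #U) (M : Finset α) (f : ℕ → ℝ) :
    hypergeomExpect U M (e + 1) f
      = (∑ i ∈ U, hypergeomExpect (U.erase i) M e (fun X => f (X + if i ∈ M then 1 else 0)))
          / #U := by
  obtain ⟨n, hn⟩ : ∃ n, #U = n + 1 := ⟨#U - 1, by omega⟩
  have hinner : ∀ i ∈ U, hypergeomExpect (U.erase i) M e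
      (fun X => f (X + if i ∈ M then 1 else 0))
      = (∑ B ∈ (U.erase i).powersetCard e, f #(insert i B ∩ M)) / n.choose e := fun i hi => by
    rw [hypergeomExpect, card_powersetCard, card_erase_of_mem hi, hn, Nat.add_sub_cancel]
    congr 1
    refine sum_congr rfl fun B hB => ?_
    rw [card_insert_inter_of_notMem fun h => notMem_erase i U ((mem_powersetCard.mp hB).1 h)]
  have hchoose : ((n + 1 : ℕ) : ℝ) * n.choose e = (n + 1).choose (e + 1) * (e + 1) := by
    exact_mod_cast Nat.add_one_mul_choose_eq n e
  rw [sum_congr rfl hinner, ← sum_div, ← succ_mul_sum_powersetCard_succ U e fun A => f #(A ∩ M),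
    hypergeomExpect, card_powersetCard, hn]
  have : (n.choose e : ℝ) ≠ 0 := by exact_mod_cast (Nat.choose_pos (by omega)).ne'
  have : ((n + 1).choose (e + 1) : ℝ) ≠ 0 := by exact_mod_cast (Nat.choose_pos (by omega)).ne'
  field_simp
  linear_combination (∑ A ∈ U.powersetCard (e + 1), f #(A ∩ M)) * hchoose

lemma sum_ite_mem_const (U M : Finset α) (a b : ℝ) :
    ∑ i ∈ U, (if i ∈ M then a else b) = #(U ∩ M) * a + (#U - #(U ∩ M)) * b := by
  rw [sum_ite, sum_const, sum_const, filter_mem_eq_inter, nsmul_eq_mul, nsmul_eq_mul,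
    ← card_filter_add_card_filter_not (s := U) (· ∈ M), filter_mem_eq_inter]
  push_cast; ring

lemma hypergeomExpect_exp_mul_le (σ : ℝ) (M : Finset α) {U : Finset α} {d : ℕ} (hd : d ≤ #U) :
    hypergeomExpect U M d (fun X => exp (σ * X)) ≤ exp (σ * d * #(U ∩ M) / #U + σ ^ 2 * d / 8) := by
  induction d generalizing U with
  | zero => simp [hypergeomExpect]
  | succ e ih =>
    obtain ⟨n, hn⟩ : ∃ n, #U = n + 1 := ⟨#U - 1, by omega⟩
    have hterm : ∀ i ∈ U, hypergeomExpect (U.erase i) M e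
        (fun X => exp (σ * ↑(X + if i ∈ M then 1 else 0))) ≤
          (if i ∈ M then exp (σ * (1 + e * (#(U ∩ M) - 1) / n))
            else exp (σ * (e * #(U ∩ M) / n))) * exp (σ ^ 2 * e / 8) := fun i hi => by
      have hcard : #(U.erase i) = n := by rw [card_erase_of_mem hi, hn, Nat.add_sub_cancel]
      rw [hypergeomExpect_exp_mul_add]
      refine (mul_le_mul_of_nonneg_left (ih (hcard ▸ by omega)) (exp_pos _).le).trans_eq ?_
      rw [hcard, cast_card_erase_inter hi, ite_mul, ← exp_add, ← exp_add, ← exp_add]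
      split_ifs <;> push_cast <;> ring_nf
    have hk : #(U ∩ M) ≤ n + 1 := hn ▸ card_le_card inter_subset_left
    rw [hypergeomExpect_succ hd, hn]
    calc (∑ i ∈ U, hypergeomExpect (U.erase i) M e
          (fun X => exp (σ * ↑(X + if i ∈ M then 1 else 0)))) / ↑(n + 1)
        ≤ (∑ i ∈ U, (if i ∈ M then exp (σ * (1 + e * (#(U ∩ M) - 1) / n))
            else exp (σ * (e * #(U ∩ M) / n))) * exp (σ ^ 2 * e / 8)) / ↑(n + 1) := by
          gcongr with i hi
          exact hterm i hi
      _ = (#(U ∩ M) * exp (σ * (1 + e * (#(U ∩ M) - 1) / n))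
            + (n + 1 - #(U ∩ M)) * exp (σ * (e * #(U ∩ M) / n))) / (n + 1)
            * exp (σ ^ 2 * e / 8) := by
          rw [← sum_mul, sum_ite_mem_const, hn]; push_cast; ring
      _ ≤ exp (σ * (e + 1) * #(U ∩ M) / (n + 1) + σ ^ 2 / 8) * exp (σ ^ 2 * e / 8) := by
          gcongr
          exact exp_mixture_le (n := n) (k := #(U ∩ M)) (e := e) (by positivity)
            (by exact_mod_cast hk) (by positivity) (by exact_mod_cast (by omega : e ≤ n)) σ
      _ = _ := by rw [← exp_add]; push_cast; ring_nf

lemma hyperExp_eq_hypergeomExpect (N K d : ℕ) (f : ℕ → ℝ) :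
    hyperExp N K d f = hypergeomExpect univ (marked N K) d f := rfl

end Sampling

/-- **Hoeffding's MGF bound for sampling without replacement.** For a hypergeometric
random variable `X` with parameters `(N, K, d)` and `p = K/N`, the moment generating
function satisfies `E[exp(s(X - dp))] ≤ exp(s² d / 8)` for all real `s`. -/
theorem hypergeometric_mgf_bound
    (N K d : ℕ) (hd : d ≤ N) (hK : K ≤ N) (s : ℝ) :
    hyperExp N K d (fun X => Real.exp (s * ((X : ℝ) - d * ((K : ℝ) / N)))) ≤
      Real.exp (s ^ 2 * d / 8) := by
  have hmarked : #(univ ∩ marked N K) = K := by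
    rw [univ_inter, marked, Fin.card_filter_val_lt, min_eq_right hK]
  have hcenter : (fun X : ℕ => exp (s * ((X : ℝ) - d * ((K : ℝ) / N))))
      = fun X : ℕ => exp (-(s * d * K / N)) * exp (s * X) :=
    funext fun X => by rw [← exp_add]; ring_nf
  have hbound := hypergeomExpect_exp_mul_le s (marked N K) (U := univ) (by simpa using hd)
  rw [hmarked, card_univ, Fintype.card_fin] at hbound
  rw [hyperExp_eq_hypergeomExpect, hcenter, hypergeomExpect_const_mul]
  calc exp (-(s * d * K / N)) * hypergeomExpect univ (marked N K) d (fun X => exp (s * X))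
      ≤ exp (-(s * d * K / N)) * exp (s * d * K / N + s ^ 2 * d / 8) := by gcongr
    _ = exp (s ^ 2 * d / 8) := by rw [← exp_add]; ring_nf
end
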